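/- arXiv:cs/0606124 — 5 statements merged into one kernel-verified Lean document; each statement's English description precedes it below -/
import Mathlib

section
/- Completing the candidate edge set with zero-weight edges does not change the optimum: let β be a set of weighted candidate edges and let β' ⊇ β be the complete candidate edge set containing one edge for every pair (v1, v2) ∈ V1 × V2, where edges of β keep their weights and all added edges have weight 0. Then the maximum of w(M) over valid alignments M ⊆ β' equals the maximum of w(M) over valid alignments M ⊆ β; moreover, deleting the zero-weight edges from any maximum-weight valid alignment for β' yields a maximum-weight valid alignment for β. -/
/-- An edge conflict for the candidate edge `e = (a, b, w_e)` with another candidate edge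
`d = (f, g, w_d)`, `d ≠ e`: (1) `a ∈ anc(f)` and `b ∉ anc(g)`, or (2) `a ∈ desc(f)` and
`b ∉ desc(g)`, or (3) `a = f`, or (4) `b = g`.  Here `anc`/`desc` are expressed via
`Relation.TransGen` of the edge relations of the two DAGs: `a ∈ anc(f)` means there is a
directed path from `a` to `f`. -/
def Conf {V1 V2 : Type*} (E1 : V1 → V1 → Prop) (E2 : V2 → V2 → Prop)
    (e d : V1 × V2 × ℝ) : Prop :=
  d ≠ e ∧
    ((Relation.TransGen E1 e.1 d.1 ∧ ¬ Relation.TransGen E2 e.2.1 d.2.1) ∨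
     (Relation.TransGen E1 d.1 e.1 ∧ ¬ Relation.TransGen E2 d.2.1 e.2.1) ∨
     e.1 = d.1 ∨ e.2.1 = d.2.1)

/-- A valid alignment is a set `M ⊆ β` such that each vertex of `V1` and of `V2` appears
in at most one edge of `M`, and for every `e ∈ M`, `conf(e) ∩ M = ∅`. -/
def ValidAlignment {V1 V2 : Type*} (E1 : V1 → V1 → Prop) (E2 : V2 → V2 → Prop)
    (β M : Finset (V1 × V2 × ℝ)) : Prop :=
  M ⊆ β ∧
  (∀ e ∈ M, ∀ d ∈ M, e ≠ d → e.1 ≠ d.1 ∧ e.2.1 ≠ d.2.1) ∧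
  (∀ e ∈ M, ∀ d ∈ M, ¬ Conf E1 E2 e d)

open scoped Classical in
/-- The completion of the candidate edge set `β`: one candidate edge for every pair
`(v1, v2) ∈ V1 × V2`, where edges of `β` keep their weights and every pair not covered by
`β` gets an added edge of weight `0`. -/
noncomputable def completion {V1 V2 : Type*} [Fintype V1] [Fintype V2]
    (β : Finset (V1 × V2 × ℝ)) : Finset (V1 × V2 × ℝ) :=
  β ∪ (Finset.univ.filter
        (fun p : V1 × V2 => ¬ ∃ e ∈ β, e.1 = p.1 ∧ e.2.1 = p.2)).image
      (fun p => (p.1, p.2, (0 : ℝ)))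

open scoped Classical in
/-- Completing the candidate edge set with zero-weight edges does not change the optimum:
the maximum of `w(M)` over valid alignments `M ⊆ β'` equals the maximum over valid
alignments `M ⊆ β`; moreover, deleting the zero-weight edges from any maximum-weight
valid alignment for `β'` yields a maximum-weight valid alignment for `β`. -/
theorem completion_same_optimum {V1 V2 : Type*} [Fintype V1] [Fintype V2]
    (E1 : V1 → V1 → Prop) (E2 : V2 → V2 → Prop)
    (hdag1 : ∀ v : V1, ¬ Relation.TransGen E1 v v)
    (hdag2 : ∀ v : V2, ¬ Relation.TransGen E2 v v)
    (β : Finset (V1 × V2 × ℝ))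
    (hw : ∀ e ∈ β, e.2.2 ∈ Set.Icc (0 : ℝ) 1) :
    (sSup {x : ℝ | ∃ M, ValidAlignment E1 E2 (completion β) M ∧ ∑ e ∈ M, e.2.2 = x} =
      sSup {x : ℝ | ∃ M, ValidAlignment E1 E2 β M ∧ ∑ e ∈ M, e.2.2 = x}) ∧
    (∀ M' : Finset (V1 × V2 × ℝ),
      ValidAlignment E1 E2 (completion β) M' →
      (∀ N, ValidAlignment E1 E2 (completion β) N → ∑ e ∈ N, e.2.2 ≤ ∑ e ∈ M', e.2.2) →
      ValidAlignment E1 E2 β (M'.filter (fun e => e.2.2 ≠ 0)) ∧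
        ∀ N, ValidAlignment E1 E2 β N →
          ∑ e ∈ N, e.2.2 ≤ ∑ e ∈ M'.filter (fun e => e.2.2 ≠ 0), e.2.2) := by
  have hsub : β ⊆ completion β := Finset.subset_union_left
  -- filtered alignment facts
  have hfilter : ∀ M' : Finset (V1 × V2 × ℝ),
      ValidAlignment E1 E2 (completion β) M' →
      ValidAlignment E1 E2 β (M'.filter (fun e => e.2.2 ≠ 0)) ∧
      ∑ e ∈ M'.filter (fun e => e.2.2 ≠ 0), e.2.2 = ∑ e ∈ M', e.2.2 := by
    intro M' ⟨hMsub, hdist, hconf⟩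
    have hsum : ∑ e ∈ M'.filter (fun e => e.2.2 ≠ 0), e.2.2 = ∑ e ∈ M', e.2.2 :=
      Finset.sum_filter_ne_zero M'
    refine ⟨⟨?_, ?_, ?_⟩, hsum⟩
    · intro e he
      rw [Finset.mem_filter] at he
      obtain ⟨heM, hne⟩ := he
      have := hMsub heM
      rcases Finset.mem_union.1 this with h | h
      · exact h
      · exfalso
        obtain ⟨p, _, hp⟩ := Finset.mem_image.1 h
        apply hne
        rw [← hp]
    · intro e he d hd hed
      exact hdist e (Finset.mem_filter.1 he).1 d (Finset.mem_filter.1 hd).1 hed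
    · intro e he d hd
      exact hconf e (Finset.mem_filter.1 he).1 d (Finset.mem_filter.1 hd).1
  have hup : ∀ N, ValidAlignment E1 E2 β N → ValidAlignment E1 E2 (completion β) N := by
    intro N ⟨h1, h2, h3⟩
    exact ⟨h1.trans hsub, h2, h3⟩
  constructor
  · congr 1
    ext x
    constructor
    · rintro ⟨M, hM, rfl⟩
      obtain ⟨hv, hs⟩ := hfilter M hM
      exact ⟨_, hv, hs⟩
    · rintro ⟨M, hM, rfl⟩
      exact ⟨M, hup M hM, rfl⟩
  · intro M' hM' hmax
    obtain ⟨hv, hs⟩ := hfilter M' hM'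
    refine ⟨hv, fun N hN => ?_⟩
    rw [hs]
    exact hmax N (hup N hN)
end

section
/- Valid alignments between two chains are exactly the strictly order-preserving partial matchings: let G1 be the chain C_n with vertices u_1, …, u_n and directed edges (u_i, u_{i+1}), and let G2 be the chain C_k with vertices v_1, …, v_k and directed edges (v_j, v_{j+1}). A set M ⊆ β in which each vertex appears in at most one edge is a valid alignment if and only if for every two distinct edges (u_i, v_j) and (u_s, v_t) of M one has i < s if and only if j < t. -/
/-- The edge relation of the chain `C_n`: a directed edge from `v_i` to `v_{i+1}`. -/
def chainE (n : ℕ) (a b : Fin n) : Prop := (a : ℕ) + 1 = (b : ℕ)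

lemma transGen_chainE_iff {n : ℕ} (a b : Fin n) :
    Relation.TransGen (chainE n) a b ↔ a < b := by
  constructor
  · intro h
    induction h with
    | single h => simp only [chainE] at h; exact Fin.lt_def.mpr (by omega)
    | tail _ h ih =>
      simp only [chainE] at h
      exact lt_trans ih (Fin.lt_def.mpr (by omega))
  · intro h
    rw [Fin.lt_def] at h
    have key : ∀ m : ℕ, ∀ b : Fin n, (b : ℕ) = (a : ℕ) + 1 + m →
        Relation.TransGen (chainE n) a b := by
      intro m
      induction m with
      | zero => intro b hb; exact Relation.TransGen.single (by simp [chainE]; omega)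
      | succ m ih =>
        intro b hb
        have hb' : (a : ℕ) + 1 + m < n := by omega
        exact Relation.TransGen.tail (ih ⟨(a:ℕ)+1+m, hb'⟩ rfl) (by simp [chainE]; omega)
    exact key ((b : ℕ) - (a : ℕ) - 1) b (by omega)

/-- Valid alignments between two chains are exactly the strictly order-preserving partial
matchings: a set `M ⊆ β` in which each vertex appears in at most one edge is a valid
alignment iff for every two distinct edges `(u_i, v_j)` and `(u_s, v_t)` of `M` one has
`i < s` iff `j < t`. -/
theorem chain_alignment_iff_order_preserving (n k : ℕ)
    (β : Finset (Fin n × Fin k × ℝ))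
    (hw : ∀ e ∈ β, e.2.2 ∈ Set.Icc (0 : ℝ) 1)
    (M : Finset (Fin n × Fin k × ℝ)) (hMβ : M ⊆ β)
    (huniq : ∀ e ∈ M, ∀ d ∈ M, e ≠ d → e.1 ≠ d.1 ∧ e.2.1 ≠ d.2.1) :
    ValidAlignment (chainE n) (chainE k) β M ↔
      ∀ e ∈ M, ∀ d ∈ M, e ≠ d → (e.1 < d.1 ↔ e.2.1 < d.2.1) := by
  constructor
  · rintro ⟨-, -, hconf⟩
    have key : ∀ e ∈ M, ∀ d ∈ M, e ≠ d → e.1 < d.1 → e.2.1 < d.2.1 := by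
      intro e he d hd hed h
      by_contra hlt
      exact hconf e he d hd ⟨Ne.symm hed, Or.inl ⟨(transGen_chainE_iff _ _).mpr h,
        fun t => hlt ((transGen_chainE_iff _ _).mp t)⟩⟩
    intro e he d hd hed
    rcases huniq e he d hd hed with ⟨hne1, -⟩
    constructor
    · exact key e he d hd hed
    · intro h
      rcases lt_trichotomy e.1 d.1 with h' | h' | h'
      · exact h'
      · exact absurd h' hne1
      · exact absurd (key d hd e he (Ne.symm hed) h') (asymm h)
  · intro hord
    refine ⟨hMβ, huniq, ?_⟩
    intro e he d hd hc
    obtain ⟨hne, hcase⟩ := hc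
    rcases huniq e he d hd (Ne.symm hne) with ⟨hne1, hne2⟩
    rw [transGen_chainE_iff, transGen_chainE_iff, transGen_chainE_iff,
      transGen_chainE_iff] at hcase
    have ho := hord e he d hd (Ne.symm hne)
    have ho2 := hord d hd e he hne
    rcases hcase with ⟨h1, h2⟩ | ⟨h1, h2⟩ | h | h
    · exact h2 (ho.mp h1)
    · exact h2 (ho2.mp h1)
    · exact hne1 h
    · exact hne2 h
end

section
/- Optimal substructure for tree alignment: let T1 and T2 be rooted trees (directed trees with all edges directed away from the root, hence DAGs), let M be a valid alignment between T1 and T2, and suppose (u, v) ∈ M. Then every edge (f, g) ∈ M with f ∈ desc(u) satisfies g ∈ desc(v), and consequently the restriction of M to edges whose first endpoint lies in {u} ∪ desc(u) is a valid alignment between the subtree of T1 rooted at u and the subtree of T2 rooted at v. -/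
/-- `IsRootedTree E r` : the directed graph with edge relation `E` is a rooted tree with
root `r`, all edges directed away from the root: it is acyclic, every non-root vertex is
reachable from the root and has a unique parent, and the root has no parent. -/
def IsRootedTree {V : Type*} (E : V → V → Prop) (r : V) : Prop :=
  (∀ v, ¬ Relation.TransGen E v v) ∧
  (∀ v, v ≠ r → Relation.TransGen E r v ∧ ∃! p, E p v) ∧
  (∀ v, ¬ E v r)

open scoped Classical in
/-- Optimal substructure for tree alignment: if `M` is a valid alignment between rooted
trees `T1` and `T2` and `(u, v) ∈ M`, then every edge `(f, g) ∈ M` with `f ∈ desc(u)`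
satisfies `g ∈ desc(v)`, and consequently the restriction of `M` to edges whose first
endpoint lies in `{u} ∪ desc(u)` is a valid alignment between the subtree of `T1` rooted
at `u` and the subtree of `T2` rooted at `v`. -/
theorem tree_alignment_substructure {V1 V2 : Type*}
    (E1 : V1 → V1 → Prop) (E2 : V2 → V2 → Prop) (r1 : V1) (r2 : V2)
    (htree1 : IsRootedTree E1 r1) (htree2 : IsRootedTree E2 r2)
    (β : Finset (V1 × V2 × ℝ))
    (hw : ∀ e ∈ β, e.2.2 ∈ Set.Icc (0 : ℝ) 1)
    (M : Finset (V1 × V2 × ℝ)) (hM : ValidAlignment E1 E2 β M)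
    (u : V1) (v : V2) (wuv : ℝ) (huv : (u, v, wuv) ∈ M) :
    (∀ e ∈ M, Relation.TransGen E1 u e.1 → Relation.TransGen E2 v e.2.1) ∧
    ValidAlignment E1 E2
      (β.filter (fun d => (d.1 = u ∨ Relation.TransGen E1 u d.1) ∧
        (d.2.1 = v ∨ Relation.TransGen E2 v d.2.1)))
      (M.filter (fun d => d.1 = u ∨ Relation.TransGen E1 u d.1)) := by

  obtain ⟨hsub, hinj, hconf⟩ := hM
  obtain ⟨hacyc1, -, -⟩ := htree1
  have key : ∀ e ∈ M, Relation.TransGen E1 u e.1 → Relation.TransGen E2 v e.2.1 := by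
    intro e he htg
    by_cases heq : e = (u, v, wuv)
    · subst heq; exact absurd htg (hacyc1 u)
    · have h := hconf (u, v, wuv) huv e he
      rw [Conf] at h
      push_neg at h
      by_contra hnot
      exact hnot ((h heq).1 htg)
  refine ⟨key, ?_, ?_, ?_⟩
  · intro d hd
    rw [Finset.mem_filter] at hd ⊢
    obtain ⟨hdM, hd1⟩ := hd
    refine ⟨hsub hdM, hd1, ?_⟩
    rcases hd1 with h | h
    · by_cases heq : d = (u, v, wuv)
      · left; rw [heq]
      · exact absurd h (hinj d hdM _ huv heq).1
    · right; exact key d hdM h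
  · intro e he d hd hne
    rw [Finset.mem_filter] at he hd
    exact hinj e he.1 d hd.1 hne
  · intro e he d hd
    rw [Finset.mem_filter] at he hd
    exact hconf e he.1 d hd.1
end

section
/- In the instance constructed from a 3SAT instance φ, for every variable index j ≤ n and all clause indices i, t ≤ m for which the vertices (x_j^0, i) ∈ V1 and (x_j^1, t) ∈ V1 both exist, the candidate edges ((x_j^0, i), (y_j, i)) and ((x_j^1, t), (z_j, t)) conflict with each other; consequently no valid alignment contains both of them. -/
/-- Vertices of the graph `G1` built from a 3SAT instance with `m` clauses: one vertex
`(x_j^p, i)` for each occurrence of a literal in a clause, i.e. one vertex per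
(clause index, position) pair — so `|V1| = 3m`. -/
abbrev V1SAT (m : ℕ) := Fin m × Fin 3

/-- A 3SAT instance with `n` variables and `m` clauses is given by
`C : Fin m → Fin 3 → Fin n × Bool`, where `C i p` is the literal at position `p` of
clause `c_i`; the literal `(j, false)` is `x_j^0 (= x_j)` and `(j, true)` is
`x_j^1 (= ¬ x_j)`.  Edges of `G1` : a directed edge from each occurrence `(x_j^0, i)` to
each occurrence `(x_j^1, t)`, for all clause indices `i, t`. -/
def E1SAT {n m : ℕ} (C : Fin m → Fin 3 → Fin n × Bool) (u w : V1SAT m) : Prop :=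
  (C u.1 u.2).1 = (C w.1 w.2).1 ∧ (C u.1 u.2).2 = false ∧ (C w.1 w.2).2 = true

/-- Vertices of the graph `G2`: the vertices `(y_j, i)` and `(z_j, i)` for `j ≤ n`,
`i ≤ m` — encoded as `Sum.inl ((j, b), i)` with `b = false` for `y_j` and `b = true` for
`z_j` — together with the vertices `(c_i, 1)` and `(c_i, 2)`, encoded `Sum.inr (i, s)`. -/
abbrev V2SAT (n m : ℕ) := ((Fin n × Bool) × Fin m) ⊕ (Fin m × Fin 2)

/-- Edges of `G2`: `((z_j, i), (y_j, t))`, `((y_j, t), (c_i, 1))` and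
`((y_j, t), (c_i, 2))` for all `j ≤ n` and `i, t ≤ m`. -/
def E2SAT {n m : ℕ} (a b : V2SAT n m) : Prop :=
  (∃ j i t, a = Sum.inl ((j, true), i) ∧ b = Sum.inl ((j, false), t)) ∨
  (∃ j t i s, a = Sum.inl ((j, false), t) ∧ b = Sum.inr (i, s))

open scoped Classical in
/-- The candidate edge set `β` of the reduction, all edges of weight `1`: each literal
occurrence `(x_j^p, i)` is matchable to its corresponding vertex of `G2` (to `(y_j, i)`
if `p = 0`, to `(z_j, i)` if `p = 1`, i.e. to `Sum.inl (C i pos, i)`), and to the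
vertices `(c_i, 1)` and `(c_i, 2)`. -/
noncomputable def betaSAT (n m : ℕ) (C : Fin m → Fin 3 → Fin n × Bool) :
    Finset (V1SAT m × V2SAT n m × ℝ) :=
  (Finset.univ.image fun v : V1SAT m => (v, Sum.inl (C v.1 v.2, v.1), (1 : ℝ))) ∪
  (Finset.univ.image fun v : V1SAT m => (v, Sum.inr (v.1, 0), (1 : ℝ))) ∪
  (Finset.univ.image fun v : V1SAT m => (v, Sum.inr (v.1, 1), (1 : ℝ)))

/-- For every variable `x_j` and clauses `c_i`, `c_t` containing the literals `x_j^0` and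
`x_j^1` respectively, the candidate edges `((x_j^0, i), (y_j, i))` and
`((x_j^1, t), (z_j, t))` conflict with each other; consequently no valid alignment -/
lemma no_path_from_y {n m : ℕ} (j : Fin n) (i : Fin m) (b : V2SAT n m)
    (h : Relation.TransGen (E2SAT (n := n) (m := m)) (Sum.inl ((j, false), i)) b) :
    ∃ x, b = Sum.inr x := by
  induction h with
  | single h =>
    rcases h with ⟨j', i', t', ha, hb⟩ | ⟨j', t', i', s', ha, hb⟩
    · simp at ha
    · exact ⟨_, hb⟩
  | tail _ h ih =>
    obtain ⟨x, rfl⟩ := ih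
    rcases h with ⟨_, _, _, ha, _⟩ | ⟨_, _, _, _, ha, _⟩ <;> simp at ha

/-- conflict -/
theorem opposite_literal_edges_conflict (n m : ℕ) (C : Fin m → Fin 3 → Fin n × Bool)
    (j : Fin n) (i t : Fin m) (pos pos' : Fin 3)
    (h0 : C i pos = (j, false)) (h1 : C t pos' = (j, true)) :
    Conf (E1SAT C) (E2SAT (n := n) (m := m))
        ((i, pos), Sum.inl ((j, false), i), (1 : ℝ))
        ((t, pos'), Sum.inl ((j, true), t), (1 : ℝ)) ∧
    Conf (E1SAT C) (E2SAT (n := n) (m := m))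
        ((t, pos'), Sum.inl ((j, true), t), (1 : ℝ))
        ((i, pos), Sum.inl ((j, false), i), (1 : ℝ)) ∧
    ∀ M, ValidAlignment (E1SAT C) (E2SAT (n := n) (m := m)) (betaSAT n m C) M →
      ¬(((i, pos), Sum.inl ((j, false), i), (1 : ℝ)) ∈ M ∧
        ((t, pos'), Sum.inl ((j, true), t), (1 : ℝ)) ∈ M) := by
  have hE1 : E1SAT C (i, pos) (t, pos') := by
    constructor
    · rw [h0, h1]
    · rw [h0, h1]; exact ⟨rfl, rfl⟩
  have hT1 : Relation.TransGen (E1SAT C) (i, pos) (t, pos') :=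
    Relation.TransGen.single hE1
  have hNo : ¬ Relation.TransGen (E2SAT (n := n) (m := m))
      (Sum.inl ((j, false), i)) (Sum.inl ((j, true), t)) := by
    intro h
    obtain ⟨x, hx⟩ := no_path_from_y j i _ h
    simp at hx
  have hne : ((t, pos'), (Sum.inl ((j, true), t) : V2SAT n m), (1 : ℝ)) ≠
      ((i, pos), Sum.inl ((j, false), i), (1 : ℝ)) := by
    intro h
    simp at h
  refine ⟨⟨hne, Or.inl ⟨hT1, hNo⟩⟩, ⟨Ne.symm hne, Or.inr (Or.inl ⟨hT1, hNo⟩)⟩, ?_⟩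
  intro M hM ⟨he, hd⟩
  exact hM.2.2 _ he _ hd ⟨hne, Or.inl ⟨hT1, hNo⟩⟩
end

section
/- Backward direction of the 3SAT reduction: if the constructed DAG alignment instance admits a valid alignment M with weight w(M) ≥ 3m, then the 3SAT instance φ is satisfiable. -/
/-!
Every edge of `β` has weight 1, so `w(M) ≥ 3m = |V1|` forces every literal occurrence to be
matched. The two vertices `(c_i, 1)`, `(c_i, 2)` absorb at most two of the three occurrences
in clause `c_i`, so some occurrence `(x_j^p, i)` is matched to `(y_j, i)` or `(z_j, i)`.
Set `x_j` true iff some `(y_j, t)` is matched. An occurrence of `¬x_j` matched to `(z_j, i)`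
then makes `x_j` false: an occurrence of `x_j` matched to `(y_j, t)` would be an ancestor of it
in `G1`, while nothing reaches `(z_j, i)` in `G2`, an edge conflict.
-/

namespace ValidAlignment

variable {V1 V2 : Type*} {E1 : V1 → V1 → Prop} {E2 : V2 → V2 → Prop}
  {β M : Finset (V1 × V2 × ℝ)}

theorem injOn_fst (hM : ValidAlignment E1 E2 β M) :
    Set.InjOn Prod.fst (M : Set (V1 × V2 × ℝ)) := fun e he d hd h =>
  by_contra fun hne => (hM.2.1 e he d hd hne).1 h

theorem injOn_snd_fst (hM : ValidAlignment E1 E2 β M) :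
    Set.InjOn (fun e => e.2.1) (M : Set (V1 × V2 × ℝ)) := fun e he d hd h =>
  by_contra fun hne => (hM.2.1 e he d hd hne).2 h

theorem transGen_of_transGen (hM : ValidAlignment E1 E2 β M) {e d : V1 × V2 × ℝ}
    (he : e ∈ M) (hd : d ∈ M) (hne : d ≠ e) (h : Relation.TransGen E1 e.1 d.1) :
    Relation.TransGen E2 e.2.1 d.2.1 :=
  by_contra fun h2 => hM.2.2 e he d hd ⟨hne, Or.inl ⟨h, h2⟩⟩

theorem exists_mem_fst_eq [Fintype V1] (hM : ValidAlignment E1 E2 β M)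
    (hcard : Fintype.card V1 ≤ M.card) (v : V1) : ∃ e ∈ M, e.1 = v := by
  classical
  have himage : M.image Prod.fst = Finset.univ := by
    refine Finset.eq_univ_of_card _ (le_antisymm (Finset.card_le_univ _) ?_)
    rwa [Finset.card_image_of_injOn hM.injOn_fst]
  have hv : v ∈ M.image Prod.fst := himage ▸ Finset.mem_univ v
  simpa using Finset.mem_image.mp hv

end ValidAlignment

section Reduction

variable {n m : ℕ} {C : Fin m → Fin 3 → Fin n × Bool}

theorem mem_betaSAT {e : V1SAT m × V2SAT n m × ℝ} :
    e ∈ betaSAT n m C ↔ e.2.2 = 1 ∧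
      (e.2.1 = Sum.inl (C e.1.1 e.1.2, e.1.1) ∨ ∃ s, e.2.1 = Sum.inr (e.1.1, s)) := by
  obtain ⟨v, b, w⟩ := e
  constructor
  · simp only [betaSAT, Finset.mem_union, Finset.mem_image, Finset.mem_univ, true_and]
    rintro ((⟨v, hv⟩ | ⟨v, hv⟩) | ⟨v, hv⟩) <;> cases hv <;> simp
  · rintro ⟨hw, h | ⟨s, h⟩⟩ <;> simp only at hw h <;> subst hw h
    · simp [betaSAT]
    · fin_cases s <;> simp [betaSAT]

theorem sum_weight_eq_card_of_subset_betaSAT {M : Finset (V1SAT m × V2SAT n m × ℝ)}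
    (hM : M ⊆ betaSAT n m C) : ∑ e ∈ M, e.2.2 = M.card := by
  rw [Finset.sum_congr rfl fun e he => (mem_betaSAT.mp (hM he)).1]
  simp

theorem not_transGen_E2SAT_z (a : V2SAT n m) (j : Fin n) (t : Fin m) :
    ¬ Relation.TransGen E2SAT a (Sum.inl ((j, true), t)) := by
  intro h
  obtain ⟨b, -, hb⟩ := Relation.TransGen.tail'_iff.mp h
  rcases hb with ⟨_, _, _, -, h⟩ | ⟨_, _, _, _, -, h⟩ <;> simp at h

theorem literal_eq_of_mem_betaSAT {e : V1SAT m × V2SAT n m × ℝ} (he : e ∈ betaSAT n m C)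
    {l : Fin n × Bool} {i : Fin m} (he2 : e.2.1 = Sum.inl (l, i)) : C e.1.1 e.1.2 = l := by
  rcases (mem_betaSAT.mp he).2 with h | ⟨s, h⟩ <;> rw [h] at he2
  · exact (Prod.mk.inj (Sum.inl.inj he2)).1
  · cases he2

variable {M : Finset (V1SAT m × V2SAT n m × ℝ)}
  (hM : ValidAlignment (E1SAT C) E2SAT (betaSAT n m C) M)
include hM

theorem exists_pos_matched_to_inl (hmatched : ∀ v, ∃ e ∈ M, e.1 = v) (i : Fin m) :
    ∃ pos, ∃ e ∈ M, e.1 = (i, pos) ∧ e.2.1 = Sum.inl (C i pos, i) := by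
  choose f hfM hf1 using hmatched
  by_contra! hcon
  have hclause : ∀ pos, ∃ s, (f (i, pos)).2.1 = Sum.inr (i, s) := fun pos => by
    have hf := hf1 (i, pos)
    rcases (mem_betaSAT.mp (hM.1 (hfM (i, pos)))).2 with h | ⟨s, h⟩ <;> rw [hf] at h
    · exact absurd h (hcon pos _ (hfM _) hf)
    · exact ⟨s, h⟩
  choose s hs using hclause
  obtain ⟨p, q, hpq, hspq⟩ := Fintype.exists_ne_map_eq_of_card_lt s (by simp)
  have hfpq : f (i, p) = f (i, q) :=
    hM.injOn_snd_fst (hfM _) (hfM _) (by simp only [hs, hspq])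
  exact hpq (Prod.mk.inj (by rw [← hf1 (i, p), ← hf1 (i, q), hfpq])).2

theorem not_matched_y_of_matched_z {e d : V1SAT m × V2SAT n m × ℝ} (he : e ∈ M) (hd : d ∈ M)
    {j : Fin n} {i t : Fin m} (he2 : e.2.1 = Sum.inl ((j, true), i))
    (hd2 : d.2.1 = Sum.inl ((j, false), t)) : False := by
  have hCe := literal_eq_of_mem_betaSAT (hM.1 he) he2
  have hCd := literal_eq_of_mem_betaSAT (hM.1 hd) hd2
  have hedge : E1SAT C d.1 e.1 := by simp [E1SAT, hCe, hCd]
  have hne : e ≠ d := fun h => by simp [h, hd2] at he2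
  have hpath := hM.transGen_of_transGen hd he hne (.single hedge)
  exact not_transGen_E2SAT_z _ _ _ (he2 ▸ hpath)

end Reduction

/-- Backward direction of the 3SAT reduction: if the constructed DAG alignment instance
admits a valid alignment `M` of weight `w(M) ≥ 3m`, then the 3SAT instance is satisfiable
(some truth assignment `A` makes a literal of every clause true, where the literal
`(j, p)` is true iff `A j = !p`). -/
theorem alignment_imp_sat (n m : ℕ) (C : Fin m → Fin 3 → Fin n × Bool)
    (M : Finset (V1SAT m × V2SAT n m × ℝ))
    (hM : ValidAlignment (E1SAT C) (E2SAT (n := n) (m := m)) (betaSAT n m C) M)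
    (hwM : ((3 * m : ℕ) : ℝ) ≤ ∑ e ∈ M, e.2.2) :
    ∃ A : Fin n → Bool, ∀ i : Fin m, ∃ pos : Fin 3, A (C i pos).1 = !(C i pos).2 := by
  classical
  have hcard : Fintype.card (V1SAT m) ≤ M.card := by
    rw [sum_weight_eq_card_of_subset_betaSAT hM.1] at hwM
    simpa [mul_comm] using (by exact_mod_cast hwM : 3 * m ≤ M.card)
  refine ⟨fun j => decide (∃ d ∈ M, ∃ t, d.2.1 = Sum.inl ((j, false), t)), fun i => ?_⟩
  obtain ⟨pos, e, he, -, he2⟩ :=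
    exists_pos_matched_to_inl hM (hM.exists_mem_fst_eq hcard) i
  refine ⟨pos, ?_⟩
  rcases hC : C i pos with ⟨j, _ | _⟩ <;> rw [hC] at he2
  · exact decide_eq_true ⟨e, he, i, he2⟩
  · exact decide_eq_false fun ⟨d, hd, t, hd2⟩ => not_matched_y_of_matched_z hM he hd he2 hd2
end
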